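/- arXiv:1804.04743 — 12 statements merged into one kernel-verified Lean document; each statement's English description precedes it below -/
import Mathlib

section
/- Let S be a regular semigroup. The set of pairs {(x,x') : x ∈ S, x' ∈ V(x)} forms a groupoid whose objects are the idempotents of S, in which (x,x') is a morphism from xx' to x'x, the composite of (x,x') and (y,y') is defined exactly when x'x = yy' and equals (xy, y'x'), the identity morphism at an idempotent e is (e,e), and the inverse of (x,x') is (x',x). In particular: if x' ∈ V(x), y' ∈ V(y) and x'x = yy', then y'x' ∈ V(xy) with (xy)(y'x') = xx' and (y'x')(xy) = y'y; this partial composition is associative where defined; (e,e) composed with (x,x') equals (x,x') whenever e = xx'; and the composite of (x,x') with (x',x) is (xx', xx'). -/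
/-- `x'` is an inverse of `x` in a semigroup: `x·x'·x = x` and `x'·x·x' = x'`. -/
def IsInverse {S : Type*} [Semigroup S] (x x' : S) : Prop :=
  x * x' * x = x ∧ x' * x * x' = x'

theorem IsIdempotentElem.isInverse_self {S : Type*} [Semigroup S] {e : S}
    (he : IsIdempotentElem e) : IsInverse e e :=
  ⟨by rw [he.eq, he.eq], by rw [he.eq, he.eq]⟩

namespace IsInverse

variable {S : Type*} [Semigroup S] {x x' y y' : S}

theorem symm (hx : IsInverse x x') : IsInverse x' x :=
  ⟨hx.2, hx.1⟩

theorem isIdempotentElem_mul (hx : IsInverse x x') : IsIdempotentElem (x * x') := by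
  rw [IsIdempotentElem, ← mul_assoc, hx.1]

theorem isIdempotentElem_mul_swap (hx : IsInverse x x') : IsIdempotentElem (x' * x) :=
  hx.symm.isIdempotentElem_mul

theorem mul_mul_mul_of_eq (hx : IsInverse x x') (h : x' * x = y * y') :
    (x * y) * (y' * x') = x * x' :=
  calc (x * y) * (y' * x') = x * (y * y') * x' := by simp only [mul_assoc]
    _ = x * x' * x * x' := by rw [← h, mul_assoc x x' x]
    _ = x * x' := by rw [hx.1]

theorem mul_mul_mul_of_eq_swap (hy : IsInverse y y') (h : x' * x = y * y') :
    (y' * x') * (x * y) = y' * y :=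
  calc (y' * x') * (x * y) = y' * (y * y') * y := by simp only [mul_assoc, ← h]
    _ = y' * y := by rw [← mul_assoc y' y y', hy.2]

theorem mul (hx : IsInverse x x') (hy : IsInverse y y') (h : x' * x = y * y') :
    IsInverse (x * y) (y' * x') := by
  constructor
  · rw [hx.mul_mul_mul_of_eq h, ← mul_assoc, hx.1]
  · rw [hy.mul_mul_mul_of_eq_swap h, ← mul_assoc, hy.2]

end IsInverse

theorem groupoid_of_pairs_of_regular_semigroup_general {S : Type*} [Semigroup S] :
    -- `(x,x')` is a morphism from the idempotent `x·x'` to the idempotent `x'·x`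
    (∀ x x' : S, IsInverse x x' →
      (x * x') * (x * x') = x * x' ∧ (x' * x) * (x' * x) = x' * x) ∧
    -- composition: if `x'·x = y·y'` then `y'·x' ∈ V(x·y)`, and the composite
    -- `(x·y, y'·x')` goes from `x·x'` to `y'·y`
    (∀ x x' y y' : S, IsInverse x x' → IsInverse y y' → x' * x = y * y' →
      IsInverse (x * y) (y' * x') ∧ (x * y) * (y' * x') = x * x' ∧
        (y' * x') * (x * y) = y' * y) ∧
    -- associativity where defined: the iterated composites are defined and agree
    (∀ x x' y y' z z' : S, IsInverse x x' → IsInverse y y' → IsInverse z z' →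
      x' * x = y * y' → y' * y = z * z' →
      (y' * x') * (x * y) = z * z' ∧ x' * x = (y * z) * (z' * y') ∧
      (x * y) * z = x * (y * z) ∧ (z' * y') * x' = z' * (y' * x')) ∧
    -- identities: `(e,e)` with `e = x·x'` is an idempotent pair composable with
    -- `(x,x')`, and the composite `(e·x, x'·e)` equals `(x,x')`
    (∀ x x' e : S, IsInverse x x' → e = x * x' →
      IsInverse e e ∧ e * e = x * x' ∧ e * x = x ∧ x' * e = x') ∧
    -- inverses: `(x',x)` is a morphism, composable with `(x,x')`, and the
    -- composite `(x·x', x·x')` is the identity at `x·x'`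
    (∀ x x' : S, IsInverse x x' →
      IsInverse x' x ∧ IsInverse (x * x') (x * x') ∧
        (x * x') * (x * x') = x * x') := by
  refine ⟨?_, ?_, ?_, ?_, ?_⟩
  · exact fun x x' hx => ⟨hx.isIdempotentElem_mul, hx.isIdempotentElem_mul_swap⟩
  · exact fun x x' y y' hx hy h =>
      ⟨hx.mul hy h, hx.mul_mul_mul_of_eq h, hy.mul_mul_mul_of_eq_swap h⟩
  · intro x x' y y' z z' _ hy _ hxy hyz
    exact ⟨(hy.mul_mul_mul_of_eq_swap hxy).trans hyz,
      hxy.trans (hy.mul_mul_mul_of_eq hyz).symm, mul_assoc x y z, mul_assoc z' y' x'⟩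
  · rintro x x' e hx rfl
    exact ⟨hx.isIdempotentElem_mul.isInverse_self, hx.isIdempotentElem_mul,
      hx.1, by rw [← mul_assoc, hx.2]⟩
  · exact fun x x' hx =>
      ⟨hx.symm, hx.isIdempotentElem_mul.isInverse_self, hx.isIdempotentElem_mul⟩

/-- The pairs `(x,x')` with `x' ∈ V(x)` of a regular semigroup `S` form a groupoid:
objects are idempotents of `S`, `(x,x')` is a morphism from `x·x'` to `x'·x`,
the composite of `(x,x')` and `(y,y')` is defined exactly when `x'·x = y·y'` and
equals `(x·y, y'·x')`, the identity at `e` is `(e,e)`, and the inverse of `(x,x')`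
is `(x',x)`. -/
theorem groupoid_of_pairs_of_regular_semigroup {S : Type*} [Semigroup S]
    (hreg : ∀ a : S, ∃ b : S, a * b * a = a ∧ b * a * b = b) :
    -- `(x,x')` is a morphism from the idempotent `x·x'` to the idempotent `x'·x`
    (∀ x x' : S, IsInverse x x' →
      (x * x') * (x * x') = x * x' ∧ (x' * x) * (x' * x) = x' * x) ∧
    -- composition: if `x'·x = y·y'` then `y'·x' ∈ V(x·y)`, and the composite
    -- `(x·y, y'·x')` goes from `x·x'` to `y'·y`
    (∀ x x' y y' : S, IsInverse x x' → IsInverse y y' → x' * x = y * y' →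
      IsInverse (x * y) (y' * x') ∧ (x * y) * (y' * x') = x * x' ∧
        (y' * x') * (x * y) = y' * y) ∧
    -- associativity where defined: the iterated composites are defined and agree
    (∀ x x' y y' z z' : S, IsInverse x x' → IsInverse y y' → IsInverse z z' →
      x' * x = y * y' → y' * y = z * z' →
      (y' * x') * (x * y) = z * z' ∧ x' * x = (y * z) * (z' * y') ∧
      (x * y) * z = x * (y * z) ∧ (z' * y') * x' = z' * (y' * x')) ∧
    -- identities: `(e,e)` with `e = x·x'` is an idempotent pair composable with
    -- `(x,x')`, and the composite `(e·x, x'·e)` equals `(x,x')`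
    (∀ x x' e : S, IsInverse x x' → e = x * x' →
      IsInverse e e ∧ e * e = x * x' ∧ e * x = x ∧ x' * e = x') ∧
    -- inverses: `(x',x)` is a morphism, composable with `(x,x')`, and the
    -- composite `(x·x', x·x')` is the identity at `x·x'`
    (∀ x x' : S, IsInverse x x' →
      IsInverse x' x ∧ IsInverse (x * x') (x * x') ∧
        (x * x') * (x * x') = x * x') :=
  groupoid_of_pairs_of_regular_semigroup_general
end

section
/- Let u' ∈ V(u), v' ∈ V(v), x' ∈ V(x), y' ∈ V(y) with u'u = vv' and x'x = yy'. If (u,u') ≤ (x,x') and (v,v') ≤ (y,y'), then v'u' ∈ V(uv), y'x' ∈ V(xy), uv = (uu')·(xy), v'u' = (y'x')·(uu'), and (uv, v'u') ≤ (xy, y'x'). (Axiom (OG1) for the ordered groupoid of pairs.) -/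
/-- The order on pairs: `(x,x') ≤ (y,y)` iff `(xx')(yy') = (yy')(xx') = xx'`,
`(x'x)(y'y) = (y'y)(x'x) = x'x`, `x = (xx')·y` and `x' = y'·(xx')`. -/
def ple {S : Type*} [Semigroup S] (x x' y y' : S) : Prop :=
  (x * x') * (y * y') = x * x' ∧ (y * y') * (x * x') = x * x' ∧
  (x' * x) * (y' * y) = x' * x ∧ (y' * y) * (x' * x) = x' * x ∧
  x = (x * x') * y ∧ x' = y' * (x * x')

section

variable {S : Type*} [Semigroup S] {u u' v v' x x' y y' : S}

namespace IsInverse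

theorem mul_mul_rev_eq_left (hu : IsInverse u u') (huv : u' * u = v * v') :
    u * v * (v' * u') = u * u' :=
  calc u * v * (v' * u') = u * (v * v') * u' := by simp only [mul_assoc]
    _ = u * u' * u * u' := by rw [← huv]; simp only [mul_assoc]
    _ = u * u' := by rw [hu.1]

theorem mul_rev_mul_eq_right (hv : IsInverse v v') (huv : u' * u = v * v') :
    v' * u' * (u * v) = v' * v :=
  calc v' * u' * (u * v) = v' * (u' * u) * v := by simp only [mul_assoc]
    _ = v' * v * v' * v := by rw [huv]; simp only [mul_assoc]
    _ = v' * v := by rw [hv.2]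

theorem mul_s2 (hu : IsInverse u u') (hv : IsInverse v v') (huv : u' * u = v * v') :
    IsInverse (u * v) (v' * u') := by
  constructor
  · rw [hu.mul_mul_rev_eq_left huv, ← mul_assoc, hu.1]
  · rw [hv.mul_rev_mul_eq_right huv, ← mul_assoc, hv.2]

end IsInverse

namespace ple

theorem mul_eq (h1 : ple u u' x x') (h2 : ple v v' y y') (hu : IsInverse u u')
    (huv : u' * u = v * v') : u * v = u * u' * (x * y) :=
  calc u * v = u * (v * v' * y) := by rw [← h2.2.2.2.2.1]
    _ = u * u' * u * y := by rw [← huv]; simp only [mul_assoc]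
    _ = u * y := by rw [hu.1]
    _ = u * u' * x * y := by rw [← h1.2.2.2.2.1]
    _ = u * u' * (x * y) := mul_assoc _ _ _

theorem mul_rev_eq (h1 : ple u u' x x') (h2 : ple v v' y y') (hu : IsInverse u u')
    (huv : u' * u = v * v') : v' * u' = y' * x' * (u * u') :=
  calc v' * u' = y' * (v * v') * u' := by rw [← h2.2.2.2.2.2]
    _ = y' * (u' * u * u') := by rw [← huv]; simp only [mul_assoc]
    _ = y' * u' := by rw [hu.2]
    _ = y' * (x' * (u * u')) := by rw [← h1.2.2.2.2.2]
    _ = y' * x' * (u * u') := (mul_assoc _ _ _).symm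

theorem mul_s2 (h1 : ple u u' x x') (h2 : ple v v' y y') (hu : IsInverse u u')
    (hv : IsInverse v v') (hx : IsInverse x x') (hy : IsInverse y y')
    (huv : u' * u = v * v') (hxy : x' * x = y * y') :
    ple (u * v) (v' * u') (x * y) (y' * x') := by
  unfold ple
  rw [hu.mul_mul_rev_eq_left huv, hv.mul_rev_mul_eq_right huv,
    hx.mul_mul_rev_eq_left hxy, hy.mul_rev_mul_eq_right hxy]
  exact ⟨h1.1, h1.2.1, h2.2.2.1, h2.2.2.2.1, h1.mul_eq h2 hu huv, h1.mul_rev_eq h2 hu huv⟩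

end ple

end

theorem ple_compatible_with_composition_general {S : Type*} [Semigroup S]
    (u u' v v' x x' y y' : S)
    (hu : IsInverse u u') (hv : IsInverse v v')
    (hx : IsInverse x x') (hy : IsInverse y y')
    (huv : u' * u = v * v') (hxy : x' * x = y * y')
    (h1 : ple u u' x x') (h2 : ple v v' y y') :
    IsInverse (u * v) (v' * u') ∧ IsInverse (x * y) (y' * x') ∧
    u * v = (u * u') * (x * y) ∧ v' * u' = (y' * x') * (u * u') ∧
    ple (u * v) (v' * u') (x * y) (y' * x') :=
  ⟨hu.mul_s2 hv huv, hx.mul_s2 hy hxy, h1.mul_eq h2 hu huv, h1.mul_rev_eq h2 hu huv,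
    h1.mul_s2 h2 hu hv hx hy huv hxy⟩

/-- Axiom (OG1) for the ordered groupoid of pairs: the partial order is
compatible with composition. -/
theorem ple_compatible_with_composition {S : Type*} [Semigroup S]
    (hreg : ∀ a : S, ∃ b : S, a * b * a = a ∧ b * a * b = b)
    (u u' v v' x x' y y' : S)
    (hu : IsInverse u u') (hv : IsInverse v v')
    (hx : IsInverse x x') (hy : IsInverse y y')
    (huv : u' * u = v * v') (hxy : x' * x = y * y')
    (h1 : ple u u' x x') (h2 : ple v v' y y') :
    IsInverse (u * v) (v' * u') ∧ IsInverse (x * y) (y' * x') ∧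
    u * v = (u * u') * (x * y) ∧ v' * u' = (y' * x') * (u * u') ∧
    ple (u * v) (v' * u') (x * y) (y' * x') :=
  ple_compatible_with_composition_general u u' v v' x x' y y' hu hv hx hy huv hxy h1 h2
end

section
/- Let x' ∈ V(x) and y' ∈ V(y). If (x,x') ≤ (y,y'), then (x',x) ≤ (y',y); explicitly, (x'x)(y'y) = (y'y)(x'x) = x'x, (xx')(yy') = (yy')(xx') = xx', x' = (x'x)·y' and x = y·(x'x). (Axiom (OG2) for the ordered groupoid of pairs.) -/
/-! The idempotent conditions of `(x,x') ≤ (y,y')` are symmetric under swapping the entries of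
each pair, so only the two factorizations need proof. Substituting `x = xx'y` and `x' = y'xx'`
into `xx'·yy' = xx'` and `yy'·xx' = xx'` gives `xy' = xx'` and `yx' = xx'`; hence
`x' = x'xx' = x'x·y'` and `x = xx'x = y·x'x`. -/

namespace ple

variable {S : Type*} [Semigroup S] {x x' y y' : S}

theorem mul_right_eq (h : ple x x' y y') : x * y' = x * x' :=
  calc x * y' = x * x' * y * y' := by rw [← h.2.2.2.2.1]
    _ = x * x' * (y * y') := by simp only [mul_assoc]
    _ = x * x' := h.1

theorem mul_left_eq (h : ple x x' y y') : y * x' = x * x' :=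
  calc y * x' = y * (y' * (x * x')) := by rw [← h.2.2.2.2.2]
    _ = y * y' * (x * x') := by simp only [mul_assoc]
    _ = x * x' := h.2.1

theorem swap (hx : IsInverse x x') (h : ple x x' y y') : ple x' x y' y := by
  refine ⟨h.2.2.1, h.2.2.2.1, h.1, h.2.1, ?_, ?_⟩
  · calc x' = x' * x * x' := hx.2.symm
      _ = x' * (x * y') := by rw [mul_assoc, h.mul_right_eq]
      _ = x' * x * y' := (mul_assoc _ _ _).symm
  · calc x = x * x' * x := hx.1.symm
      _ = y * x' * x := by rw [h.mul_left_eq]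
      _ = y * (x' * x) := mul_assoc _ _ _

end ple

theorem ple_compatible_with_inversion_general {S : Type*} [Semigroup S]
    (x x' y y' : S) (hx : IsInverse x x')
    (h : ple x x' y y') :
    ple x' x y' y ∧
    (x' * x) * (y' * y) = x' * x ∧ (y' * y) * (x' * x) = x' * x ∧
    (x * x') * (y * y') = x * x' ∧ (y * y') * (x * x') = x * x' ∧
    x' = (x' * x) * y' ∧ x = y * (x' * x) :=
  ⟨h.swap hx, h.swap hx⟩

/-- Axiom (OG2) for the ordered groupoid of pairs: the partial order is
compatible with inversion, i.e. `(x,x') ≤ (y,y')` implies `(x',x) ≤ (y',y)`. -/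
theorem ple_compatible_with_inversion {S : Type*} [Semigroup S]
    (hreg : ∀ a : S, ∃ b : S, a * b * a = a ∧ b * a * b = b)
    (x x' y y' : S) (hx : IsInverse x x') (hy : IsInverse y y')
    (h : ple x x' y y') :
    ple x' x y' y ∧
    (x' * x) * (y' * y) = x' * x ∧ (y' * y) * (x' * x) = x' * x ∧
    (x * x') * (y * y') = x * x' ∧ (y * y') * (x * x') = x * x' ∧
    x' = (x' * x) * y' ∧ x = y * (x' * x) :=
  ple_compatible_with_inversion_general x x' y y' hx h
end

section
/- Let x' ∈ V(x), set e = xx', and let g be an idempotent with ge = eg = g. Then x'g ∈ V(gx), (gx)(x'g) = g, (x'g)(gx) = x'gx, and (gx, x'g) ≤ (x, x'). (The restriction of the morphism (x,x') to g is a well-defined morphism below (x,x').) -/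
/-! Since `g ≤ x·x'`, we get `(g·x)(x'·g) = g·(x·x')·g = g`; substituting this product,
every required identity collapses to one of the hypotheses or to `x·x'·x = x`, `x'·x·x' = x'`. -/

namespace IsInverse

variable {S : Type*} [Semigroup S]

theorem of_mul_eq {a b e : S} (hab : a * b = e) (ha : e * a = a) (hb : b * e = b) :
    IsInverse a b :=
  ⟨by rw [hab, ha], by rw [mul_assoc, hab, hb]⟩

end IsInverse

section Restriction

variable {S : Type*} [Semigroup S] {x x' g : S}

theorem restrict_mul_restrict (hg : g * g = g) (hge : g * (x * x') = g) :
    (g * x) * (x' * g) = g := by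
  calc (g * x) * (x' * g) = g * (x * x') * g := by simp only [mul_assoc]
    _ = g := by rw [hge, hg]

theorem restrict_inv_mul_restrict (hg : g * g = g) :
    (x' * g) * (g * x) = x' * g * x := by
  rw [mul_assoc x', ← mul_assoc g, hg, mul_assoc]

theorem isInverse_restrict (hg : g * g = g) (hge : g * (x * x') = g) :
    IsInverse (g * x) (x' * g) :=
  .of_mul_eq (restrict_mul_restrict hg hge) (by rw [← mul_assoc, hg])
    (by rw [mul_assoc, hg])

theorem ple_restrict (hx : IsInverse x x') (hg : g * g = g)
    (hge : g * (x * x') = g) (heg : (x * x') * g = g) :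
    ple (g * x) (x' * g) x x' := by
  obtain ⟨hxx'x, hx'xx'⟩ := hx
  rw [ple, restrict_mul_restrict hg hge, restrict_inv_mul_restrict hg]
  refine ⟨hge, heg, ?_, ?_, rfl, rfl⟩
  · calc x' * g * x * (x' * x) = x' * g * (x * x' * x) := by simp only [mul_assoc]
      _ = x' * g * x := by rw [hxx'x]
  · calc x' * x * (x' * g * x) = x' * x * x' * g * x := by simp only [mul_assoc]
      _ = x' * g * x := by rw [hx'xx']

end Restriction

theorem restriction_is_morphism_below_general {S : Type*} [Semigroup S]
    (x x' g : S) (hx : IsInverse x x') (hg : g * g = g)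
    (hge : g * (x * x') = g) (heg : (x * x') * g = g) :
    IsInverse (g * x) (x' * g) ∧
    (g * x) * (x' * g) = g ∧ (x' * g) * (g * x) = x' * g * x ∧
    ple (g * x) (x' * g) x x' :=
  ⟨isInverse_restrict hg hge, restrict_mul_restrict hg hge, restrict_inv_mul_restrict hg,
    ple_restrict hx hg hge heg⟩

/-- The restriction of the morphism `(x,x')` to an idempotent `g` lying under
`e = x·x'` is the well-defined morphism `(g·x, x'·g) ≤ (x,x')` from `g` to
`x'·g·x`. -/
theorem restriction_is_morphism_below {S : Type*} [Semigroup S]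
    (hreg : ∀ a : S, ∃ b : S, a * b * a = a ∧ b * a * b = b)
    (x x' g : S) (hx : IsInverse x x') (hg : g * g = g)
    (hge : g * (x * x') = g) (heg : (x * x') * g = g) :
    IsInverse (g * x) (x' * g) ∧
    (g * x) * (x' * g) = g ∧ (x' * g) * (g * x) = x' * g * x ∧
    ple (g * x) (x' * g) x x' :=
  restriction_is_morphism_below_general x x' g hx hg hge heg
end

section
/- Let x' ∈ V(x), set f = x'x, and let h be an idempotent with hf = fh = h. Then hx' ∈ V(xh), (hx')(xh) = h, (xh)(hx') = xhx', and (xh, hx') ≤ (x, x'). (The corestriction of the morphism (x,x') to h is a well-defined morphism below (x,x').) -/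
/-!
Only reassociation is needed: `f = x'·x` absorbs `h` on both sides, so
`(h·x')·(x·h) = h·f·h = h`, and `x·x'·x = x`, `x'·x·x' = x'` absorb the remaining
factors of `x·h·x'`.
-/

section Corestriction

variable {S : Type*} [Semigroup S] {x x' h : S}

theorem corestriction_mul_eq_self (hh : IsIdempotentElem h) (hfh : x' * x * h = h) :
    h * x' * (x * h) = h := by
  rw [mul_assoc, ← mul_assoc x', hfh, hh.eq]

theorem corestriction_mul_eq (hh : IsIdempotentElem h) : x * h * (h * x') = x * h * x' := by
  rw [← mul_assoc, mul_assoc x, hh.eq]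

theorem isInverse_corestriction (hh : IsIdempotentElem h) (hfh : x' * x * h = h) :
    IsInverse (x * h) (h * x') := by
  have key := corestriction_mul_eq_self hh hfh
  constructor
  · rw [mul_assoc, key, mul_assoc, hh.eq]
  · rw [key, ← mul_assoc, hh.eq]

theorem ple_corestriction (hx : IsInverse x x') (hh : IsIdempotentElem h)
    (hhf : h * (x' * x) = h) (hfh : x' * x * h = h) :
    ple (x * h) (h * x') x x' := by
  obtain ⟨hxx'x, hx'xx'⟩ := hx
  unfold ple
  rw [corestriction_mul_eq hh, corestriction_mul_eq_self hh hfh]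
  refine ⟨?_, ?_, hhf, hfh, ?_, ?_⟩
  · rw [mul_assoc, ← mul_assoc x', hx'xx']
  · rw [← mul_assoc, ← mul_assoc, hxx'x]
  · rw [mul_assoc, mul_assoc, hhf]
  · rw [← mul_assoc, ← mul_assoc, hfh]

end Corestriction

theorem corestriction_is_morphism_below_general {S : Type*} [Semigroup S]
    (x x' h : S) (hx : IsInverse x x') (hh : h * h = h)
    (hhf : h * (x' * x) = h) (hfh : (x' * x) * h = h) :
    IsInverse (x * h) (h * x') ∧
    (h * x') * (x * h) = h ∧ (x * h) * (h * x') = x * h * x' ∧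
    ple (x * h) (h * x') x x' :=
  ⟨isInverse_corestriction hh hfh, corestriction_mul_eq_self hh hfh, corestriction_mul_eq hh,
    ple_corestriction hx hh hhf hfh⟩

/-- The corestriction of the morphism `(x,x')` to an idempotent `h` lying under
`f = x'·x` is the well-defined morphism `(x·h, h·x') ≤ (x,x')` from `x·h·x'`
to `h`. -/
theorem corestriction_is_morphism_below {S : Type*} [Semigroup S]
    (hreg : ∀ a : S, ∃ b : S, a * b * a = a ∧ b * a * b = b)
    (x x' h : S) (hx : IsInverse x x') (hh : h * h = h)
    (hhf : h * (x' * x) = h) (hfh : (x' * x) * h = h) :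
    IsInverse (x * h) (h * x') ∧
    (h * x') * (x * h) = h ∧ (x * h) * (h * x') = x * h * x' ∧
    ple (x * h) (h * x') x x' :=
  corestriction_is_morphism_below_general x x' h hx hh hhf hfh
end

section
/- Let (e₀, e₁, …, e_n) be an E-chain in a semigroup S, and set w = e₀·e₁⋯e_n and w' = e_n·e_{n-1}⋯e₁·e₀. Then w·w' = e₀, w'·w = e_n, and w' ∈ V(w) (i.e. w·w'·w = w and w'·w·w' = w'). Hence the evaluation ε_Γ of an E-chain is a morphism in the groupoid of pairs from e₀ to e_n. -/
/-- `fwdProd e n = e 0 * e 1 * ⋯ * e n`. -/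
def fwdProd {S : Type*} [Semigroup S] (e : ℕ → S) : ℕ → S
  | 0 => e 0
  | n + 1 => fwdProd e n * e (n + 1)

/-- `bwdProd e n = e n * e (n-1) * ⋯ * e 0`. -/
def bwdProd {S : Type*} [Semigroup S] (e : ℕ → S) : ℕ → S
  | 0 => e 0
  | n + 1 => e (n + 1) * bwdProd e n

/-!
Consecutive entries `e, f` of an E-chain are mutually inverse: `e f e = e` and `f e f = f`.
Hence, by induction on the length of the chain, `w·w'` collapses from the middle,
`⋯ e_{n-1} eₙ eₙ e_{n-1} ⋯ = ⋯ e_{n-1} ⋯`, down to `e₀`, and symmetrically `w'·w = eₙ`.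
-/

section Semigroup

variable {S : Type*} [Semigroup S]

theorem mul_mul_eq_self_of_R_or_L {e f : S}
    (h : (e * f = f ∧ f * e = e) ∨ (e * f = e ∧ f * e = f)) :
    e * f * e = e ∧ f * e * f = f := by
  rcases h with ⟨hef, hfe⟩ | ⟨hef, hfe⟩
  · exact ⟨by rw [hef, hfe], by rw [hfe, hef]⟩
  · exact ⟨by rw [mul_assoc, hfe, hef], by rw [mul_assoc, hef, hfe]⟩

variable (e : ℕ → S)

theorem fwdProd_mul_self {n : ℕ} (h : IsIdempotentElem (e n)) :
    fwdProd e n * e n = fwdProd e n := by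
  cases n with
  | zero => exact h
  | succ m => rw [fwdProd, mul_assoc, h]

theorem self_mul_bwdProd {n : ℕ} (h : IsIdempotentElem (e n)) :
    e n * bwdProd e n = bwdProd e n := by
  cases n with
  | zero => exact h
  | succ m => rw [bwdProd, ← mul_assoc, h]

theorem zero_mul_fwdProd (h : IsIdempotentElem (e 0)) (n : ℕ) :
    e 0 * fwdProd e n = fwdProd e n := by
  induction n with
  | zero => exact h
  | succ m ih => rw [fwdProd, ← mul_assoc, ih]

theorem fwdProd_mul_bwdProd_and_bwdProd_mul_fwdProd {n : ℕ}
    (hidem : ∀ i ≤ n, IsIdempotentElem (e i))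
    (hinv : ∀ i < n, e i * e (i + 1) * e i = e i ∧ e (i + 1) * e i * e (i + 1) = e (i + 1)) :
    fwdProd e n * bwdProd e n = e 0 ∧ bwdProd e n * fwdProd e n = e n := by
  induction n with
  | zero => exact ⟨hidem 0 le_rfl, hidem 0 le_rfl⟩
  | succ m ih =>
    obtain ⟨hww', hw'w⟩ := ih (fun i hi => hidem i (hi.trans m.le_succ))
      (fun i hi => hinv i (hi.trans m.lt_succ_self))
    have hm := hidem m m.le_succ
    obtain ⟨hmid, hmid'⟩ := hinv m m.lt_succ_self
    constructor
    · calc fwdProd e (m + 1) * bwdProd e (m + 1)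
          = fwdProd e m * (e (m + 1) * e (m + 1)) * bwdProd e m := by
            simp only [fwdProd, bwdProd, mul_assoc]
        _ = fwdProd e m * e m * e (m + 1) * (e m * bwdProd e m) := by
            rw [hidem (m + 1) le_rfl, fwdProd_mul_self e hm, self_mul_bwdProd e hm]
        _ = fwdProd e m * (e m * e (m + 1) * e m) * bwdProd e m := by
            simp only [mul_assoc]
        _ = e 0 := by rw [hmid, fwdProd_mul_self e hm, hww']
    · calc bwdProd e (m + 1) * fwdProd e (m + 1)
          = e (m + 1) * (bwdProd e m * fwdProd e m) * e (m + 1) := by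
            simp only [fwdProd, bwdProd, mul_assoc]
        _ = e (m + 1) := by rw [hw'w, hmid']

end Semigroup

/-- If `(e₀, e₁, …, eₙ)` is an E-chain in a semigroup `S` (each `eᵢ` idempotent
and consecutive entries `R`-related or `L`-related), then with
`w = e₀·e₁⋯eₙ` and `w' = eₙ·e_{n-1}⋯e₁·e₀` one has `w·w' = e₀`, `w'·w = eₙ`,
and `w' ∈ V(w)`. -/
theorem echain_evaluation_is_morphism {S : Type*} [Semigroup S]
    (e : ℕ → S) (n : ℕ)
    (hidem : ∀ i ≤ n, e i * e i = e i)
    (hchain : ∀ i < n,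
      (e i * e (i + 1) = e (i + 1) ∧ e (i + 1) * e i = e i) ∨
      (e i * e (i + 1) = e i ∧ e (i + 1) * e i = e (i + 1))) :
    fwdProd e n * bwdProd e n = e 0 ∧
    bwdProd e n * fwdProd e n = e n ∧
    fwdProd e n * bwdProd e n * fwdProd e n = fwdProd e n ∧
    bwdProd e n * fwdProd e n * bwdProd e n = bwdProd e n := by
  obtain ⟨hww', hw'w⟩ := fwdProd_mul_bwdProd_and_bwdProd_mul_fwdProd e hidem
    fun i hi => mul_mul_eq_self_of_R_or_L (hchain i hi)
  refine ⟨hww', hw'w, ?_, ?_⟩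
  · rw [hww', zero_mul_fwdProd e (hidem 0 n.zero_le)]
  · rw [hw'w, self_mul_bwdProd e (hidem n le_rfl)]
end

section
/- Let S be a regular semigroup, x' ∈ V(x), e = xx'. Let e₁, e₂ be idempotents with e_i·e = e·e_i = e_i for i = 1,2, and set f_i = x'·e_i·x. Then each f_i is idempotent; if moreover e₂·e₁ = e₁, then f₂·f₁ = f₁ and e₁·e₂·x = (e₁·x)·(x'·e₁·x)·(x'·e₂·x). (Verification of axiom (IG1) for the inductive groupoid constructed from the cross-connection of S.) -/
section Semigroup

variable {S : Type*} [Semigroup S] {a b x x' : S}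

theorem mul_mul_conj_eq (hb : x * x' * b = b) : a * x * (x' * b * x) = a * b * x := by
  calc a * x * (x' * b * x) = a * (x * x' * b) * x := by simp only [mul_assoc]
    _ = a * b * x := by rw [hb]

theorem IsIdempotentElem.conj (hb : IsIdempotentElem b) (hxb : x * x' * b = b) :
    IsIdempotentElem (x' * b * x) := by
  rw [IsIdempotentElem, mul_mul_conj_eq hxb, mul_assoc x', hb.eq]

end Semigroup

theorem IG1_for_cross_connection_groupoid_general {S : Type*} [Semigroup S]
    (x x' e₁ e₂ : S)
    (h₁ : e₁ * e₁ = e₁) (h₂ : e₂ * e₂ = e₂)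
    (he₁ : (x * x') * e₁ = e₁)
    (he₂ : (x * x') * e₂ = e₂) :
    (x' * e₁ * x) * (x' * e₁ * x) = x' * e₁ * x ∧
    (x' * e₂ * x) * (x' * e₂ * x) = x' * e₂ * x ∧
    (e₂ * e₁ = e₁ →
      (x' * e₂ * x) * (x' * e₁ * x) = x' * e₁ * x ∧
      e₁ * e₂ * x = (e₁ * x) * (x' * e₁ * x) * (x' * e₂ * x)) := by
  refine ⟨IsIdempotentElem.conj h₁ he₁, IsIdempotentElem.conj h₂ he₂, fun h₂₁ => ⟨?_, ?_⟩⟩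
  · rw [mul_mul_conj_eq he₁, mul_assoc x', h₂₁]
  · rw [mul_mul_conj_eq he₁, mul_mul_conj_eq he₂, h₁]

/-- Verification of axiom (IG1) for the inductive groupoid constructed from the
cross-connection of a regular semigroup `S`: with `x' ∈ V(x)`, `e = x·x'`,
idempotents `e₁, e₂ ω e`, and `fᵢ = x'·eᵢ·x`, each `fᵢ` is idempotent, and if
`e₂·e₁ = e₁` (i.e. `e₁ ωʳ e₂`) then `f₂·f₁ = f₁` and
`e₁·e₂·x = (e₁·x)·(x'·e₁·x)·(x'·e₂·x)`. -/
theorem IG1_for_cross_connection_groupoid {S : Type*} [Semigroup S]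
    (hreg : ∀ a : S, ∃ b : S, a * b * a = a ∧ b * a * b = b)
    (x x' e₁ e₂ : S) (hx : IsInverse x x')
    (h₁ : e₁ * e₁ = e₁) (h₂ : e₂ * e₂ = e₂)
    (h₁e : e₁ * (x * x') = e₁) (he₁ : (x * x') * e₁ = e₁)
    (h₂e : e₂ * (x * x') = e₂) (he₂ : (x * x') * e₂ = e₂) :
    (x' * e₁ * x) * (x' * e₁ * x) = x' * e₁ * x ∧
    (x' * e₂ * x) * (x' * e₂ * x) = x' * e₂ * x ∧
    (e₂ * e₁ = e₁ →
      (x' * e₂ * x) * (x' * e₁ * x) = x' * e₁ * x ∧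
      e₁ * e₂ * x = (e₁ * x) * (x' * e₁ * x) * (x' * e₂ * x)) :=
  IG1_for_cross_connection_groupoid_general x x' e₁ e₂ h₁ h₂ he₁ he₂
end

section
/- Let e, g, h be idempotents of a semigroup S with e·g = g, e·h = h, g·h = g and h·g = h (a column-singular E-square). Then g·e and h·e are idempotents, h ∈ V(g·e), and the two composite evaluations coincide: (g·h)·(h·(h·e)) = (g·(g·e))·((g·e)·(h·e)) = g·e, and ((h·e)·h)·(h·g) = ((h·e)·(g·e))·((g·e)·g) = h. Hence every column-singular E-square is ε_Γ-commutative (axiom (IG2)). -/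
section

variable {S : Type*} [Semigroup S] {e g h : S}

theorem IsIdempotentElem.mul_right_of_mul_eq (hg : IsIdempotentElem g) (heg : e * g = g) :
    IsIdempotentElem (g * e) := by
  rw [IsIdempotentElem, mul_assoc, ← mul_assoc e, heg, ← mul_assoc, hg.eq]

theorem mul_mul_eq_left_of_mul_eq (heh : e * h = h) (hgh : g * h = g) : g * e * h = g := by
  rw [mul_assoc, heh, hgh]

theorem isInverse_mul_of_mul_eq (heh : e * h = h) (hgh : g * h = g) (hhg : h * g = h) :
    IsInverse (g * e) h := by
  constructor
  · rw [mul_assoc (g * e) h, ← mul_assoc h g, hhg, ← mul_assoc,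
      mul_mul_eq_left_of_mul_eq heh hgh]
  · rw [mul_assoc, mul_mul_eq_left_of_mul_eq heh hgh, hhg]

end

theorem column_singular_esquare_commutes_general {S : Type*} [Semigroup S]
    (e g h : S) (hg : g * g = g) (hh : h * h = h)
    (heg : e * g = g) (heh : e * h = h)
    (hgh : g * h = g) (hhg : h * g = h) :
    (g * e) * (g * e) = g * e ∧ (h * e) * (h * e) = h * e ∧
    IsInverse (g * e) h ∧
    (g * h) * (h * (h * e)) = g * e ∧
    (g * (g * e)) * ((g * e) * (h * e)) = g * e ∧
    ((h * e) * h) * (h * g) = h ∧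
    ((h * e) * (g * e)) * ((g * e) * g) = h := by
  have hge : IsIdempotentElem (g * e) := IsIdempotentElem.mul_right_of_mul_eq hg heg
  have hgeh : g * e * h = g := mul_mul_eq_left_of_mul_eq heh hgh
  have hgeg : g * e * g = g := by rw [mul_assoc, heg, hg]
  refine ⟨hge, IsIdempotentElem.mul_right_of_mul_eq hh heh, isInverse_mul_of_mul_eq heh hgh hhg,
    ?_, ?_, ?_, ?_⟩
  · rw [hgh, ← mul_assoc h, hh, ← mul_assoc, hgh]
  · rw [← mul_assoc g g, hg, ← mul_assoc (g * e) h, hgeh, hge.eq]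
  · rw [mul_assoc h e h, heh, hh, hhg, hh]
  · rw [hgeg, mul_assoc (h * e), hgeg, mul_assoc, heg, hhg]

/-- Axiom (IG2): every column-singular E-square is `ε_Γ`-commutative.  For
idempotents `e, g, h` with `e·g = g`, `e·h = h` (i.e. `g, h ∈ ωʳ(e)`),
`g·h = g` and `h·g = h` (i.e. `g L h`): `g·e` and `h·e` are idempotents,
`h ∈ V(g·e)`, and the composite evaluations along the two sides of the square
`[g, g·e; h, h·e]` agree:
`(g·h)·(h·(h·e)) = (g·(g·e))·((g·e)·(h·e)) = g·e` and
`((h·e)·h)·(h·g) = ((h·e)·(g·e))·((g·e)·g) = h`. -/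
theorem column_singular_esquare_commutes {S : Type*} [Semigroup S]
    (e g h : S) (he : e * e = e) (hg : g * g = g) (hh : h * h = h)
    (heg : e * g = g) (heh : e * h = h)
    (hgh : g * h = g) (hhg : h * g = h) :
    (g * e) * (g * e) = g * e ∧ (h * e) * (h * e) = h * e ∧
    IsInverse (g * e) h ∧
    (g * h) * (h * (h * e)) = g * e ∧
    (g * (g * e)) * ((g * e) * (h * e)) = g * e ∧
    ((h * e) * h) * (h * g) = h ∧
    ((h * e) * (g * e)) * ((g * e) * g) = h :=
  column_singular_esquare_commutes_general e g h hg hh heg heh hgh hhg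
end

section
/- Let S be a regular semigroup and T = {(e,u,f) : e, f ∈ E(S), e·u = u = u·f}. The relation ∼ on T defined by (e,u,f) ∼ (g,v,h) iff e L g, f L h and u = e·v, is an equivalence relation. -/
/-- Green's `L` relation on idempotents: `e L g` iff `e·g = e` and `g·e = g`. -/
def LRel {S : Type*} [Semigroup S] (e g : S) : Prop := e * g = e ∧ g * e = g

/-- The set `T = {(e,u,f) : e, f ∈ E(S), e·u = u = u·f}` of triples. -/
def TSet (S : Type*) [Semigroup S] : Set (S × S × S) :=
  {t | t.1 * t.1 = t.1 ∧ t.2.2 * t.2.2 = t.2.2 ∧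
       t.1 * t.2.1 = t.2.1 ∧ t.2.1 * t.2.2 = t.2.1}

/-- The relation `∼` on triples: `(e,u,f) ∼ (g,v,h)` iff `e L g`, `f L h`
and `u = e·v`. -/
def simRel {S : Type*} [Semigroup S] (a b : S × S × S) : Prop :=
  LRel a.1 b.1 ∧ LRel a.2.2 b.2.2 ∧ a.2.1 = a.1 * b.2.1

namespace LRel

variable {S : Type*} [Semigroup S] {e g i : S}

theorem refl_of_isIdempotentElem (he : IsIdempotentElem e) : LRel e e := ⟨he, he⟩

theorem symm (h : LRel e g) : LRel g e := ⟨h.2, h.1⟩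

theorem trans (heg : LRel e g) (hgi : LRel g i) : LRel e i := by
  constructor
  · calc e * i = e * g * i := by rw [heg.1]
      _ = e * g := by rw [mul_assoc, hgi.1]
      _ = e := heg.1
  · calc i * e = i * g * e := by rw [hgi.2]
      _ = i * g := by rw [mul_assoc, heg.2]
      _ = i := hgi.2

end LRel

namespace simRel

variable {S : Type*} [Semigroup S] {a b c : S × S × S}

theorem refl_of_mem_tSet (ha : a ∈ TSet S) : simRel a a :=
  ⟨.refl_of_isIdempotentElem ha.1, .refl_of_isIdempotentElem ha.2.1, ha.2.2.1.symm⟩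

theorem symm (hb : b ∈ TSet S) (hab : simRel a b) : simRel b a := by
  obtain ⟨hL, hR, hu⟩ := hab
  refine ⟨hL.symm, hR.symm, ?_⟩
  calc b.2.1 = b.1 * b.2.1 := hb.2.2.1.symm
    _ = b.1 * (a.1 * b.2.1) := by rw [← mul_assoc, hL.2]
    _ = b.1 * a.2.1 := by rw [← hu]

theorem trans (hab : simRel a b) (hbc : simRel b c) : simRel a c := by
  obtain ⟨hL, hR, hu⟩ := hab
  obtain ⟨hL', hR', hv⟩ := hbc
  refine ⟨hL.trans hL', hR.trans hR', ?_⟩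
  rw [hu, hv, ← mul_assoc, hL.1]

end simRel

theorem simRel_is_equivalence_general {S : Type*} [Semigroup S] :
    Equivalence (fun a b : TSet S => simRel a.val b.val) :=
  ⟨fun a => .refl_of_mem_tSet a.2, fun {_ b} => .symm b.2, .trans⟩

/-- For a regular semigroup `S`, the relation `∼` on
`T = {(e,u,f) : e, f ∈ E(S), e·u = u = u·f}` defined by
`(e,u,f) ∼ (g,v,h)` iff `e L g`, `f L h` and `u = e·v`, is an equivalence
relation. -/
theorem simRel_is_equivalence {S : Type*} [Semigroup S]
    (hreg : ∀ a : S, ∃ b : S, a * b * a = a ∧ b * a * b = b) :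
    Equivalence (fun a b : TSet S => simRel a.val b.val) :=
  simRel_is_equivalence_general
end

section
/- In the category 𝓛_G built from a regular semigroup S, every inclusion splits: for idempotents e, f with e·f = e, the element f·e is idempotent, f·(f·e) = f·e, (f·e)·e = f·e, e·(f·e) = e, and the composite [(e,e,f)]·[(f, f·e, e)] equals the identity [(e,e,e)]; thus the retraction [(f, f·e, e)] is a right inverse of the inclusion [(e,e,f)]. -/
section

variable {S : Type*} [Semigroup S] {e f : S}

theorem mul_mul_eq_left_of_mul_eq_s13 (he : e * e = e) (hef : e * f = e) : e * (f * e) = e := by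
  rw [← mul_assoc, hef, he]

theorem mul_self_mul_eq_of_mul_eq (he : e * e = e) (hef : e * f = e) :
    (f * e) * (f * e) = f * e := by
  rw [mul_assoc, mul_mul_eq_left_of_mul_eq_s13 he hef]

theorem lRel_self (he : e * e = e) : LRel e e := ⟨he, he⟩

end

theorem inclusions_split_general {S : Type*} [Semigroup S]
    (e f : S) (he : e * e = e) (hf : f * f = f) (hef : e * f = e) :
    (f * e) * (f * e) = f * e ∧
    f * (f * e) = f * e ∧ (f * e) * e = f * e ∧ e * (f * e) = e ∧
    simRel (e, e * (f * e), e) (e, e, e) := by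
  have hefe : e * (f * e) = e := mul_mul_eq_left_of_mul_eq_s13 he hef
  refine ⟨mul_self_mul_eq_of_mul_eq he hef, by rw [← mul_assoc, hf], by rw [mul_assoc, he], hefe,
    lRel_self he, lRel_self he, ?_⟩
  rw [hefe, he]

/-- Every inclusion in `𝓛_G` splits: for idempotents `e, f` with `e·f = e`,
the element `f·e` is idempotent, `f·(f·e) = f·e`, `(f·e)·e = f·e`,
`e·(f·e) = e`, and the composite `[(e,e,f)]·[(f, f·e, e)] = [(e, e·(f·e), e)]`
equals the identity `[(e,e,e)]`; thus the retraction `[(f, f·e, e)]` is a right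
inverse of the inclusion `[(e,e,f)]`. -/
theorem inclusions_split {S : Type*} [Semigroup S]
    (hreg : ∀ a : S, ∃ b : S, a * b * a = a ∧ b * a * b = b)
    (e f : S) (he : e * e = e) (hf : f * f = f) (hef : e * f = e) :
    (f * e) * (f * e) = f * e ∧
    f * (f * e) = f * e ∧ (f * e) * e = f * e ∧ e * (f * e) = e ∧
    simRel (e, e * (f * e), e) (e, e, e) :=
  inclusions_split_general e f he hf hef
end

section
/- The pair (𝓛_G, 𝒫_L) built from a regular semigroup S is a category with subobjects: (i) every inclusion [(e,e,f)] (where e·f = e) is a monomorphism in 𝓛_G, i.e. if [(g,u,e)]·[(e,e,f)] = [(h,v,e)]·[(e,e,f)] then [(g,u,e)] = [(h,v,e)]; and (ii) if an inclusion factors as [(e,e,f)] = [(g,u,k)]·[(k,k,l)] with e·f = e and k·l = k, then u = g, so the first factor [(g,u,k)] = [(g,g,k)] is itself an inclusion. -/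
section

variable {S : Type*} [Semigroup S]

theorem LRel.refl_of_mul_self {e : S} (he : e * e = e) : LRel e e :=
  ⟨he, he⟩

theorem simRel_of_simRel_mul_right {e f g h u v : S}
    (he : e * e = e) (hue : u * e = u) (hve : v * e = v)
    (hsim : simRel (g, u * e, f) (h, v * e, f)) : simRel (g, u, e) (h, v, e) := by
  obtain ⟨hLgh, -, heq⟩ := hsim
  refine ⟨hLgh, LRel.refl_of_mul_self he, ?_⟩
  calc u = u * e := hue.symm
    _ = g * (v * e) := heq
    _ = g * v := by rw [hve]

theorem eq_of_mul_eq_of_mul_eq {e g u : S}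
    (hgu : g * u = u) (hge : g * e = g) (heu : e * u = e) : u = g :=
  calc u = g * u := hgu.symm
    _ = g * e * u := by rw [hge]
    _ = g * e := by rw [mul_assoc, heu]
    _ = g := hge

end

theorem LG_category_with_subobjects_general {S : Type*} [Semigroup S] :
    -- (i) inclusions are monomorphisms
    (∀ e f g h u v : S, e * e = e → f * f = f → g * g = g → h * h = h →
      e * f = e → (g, u, e) ∈ TSet S → (h, v, e) ∈ TSet S →
      simRel (g, u * e, f) (h, v * e, f) → simRel (g, u, e) (h, v, e)) ∧
    -- (ii) left factors of inclusions through inclusions are inclusions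
    (∀ e f g k l u : S, e * e = e → f * f = f → g * g = g → k * k = k →
      l * l = l → e * f = e → k * l = k → (g, u, k) ∈ TSet S →
      simRel (e, e, f) (g, u * k, l) → u = g) := by
  constructor
  · rintro e f g h u v he - - - - ⟨-, -, -, hue⟩ ⟨-, -, -, hve⟩ hsim
    exact simRel_of_simRel_mul_right he hue hve hsim
  · rintro e f g k l u - - - - - - - ⟨-, -, hgu, huk⟩ ⟨⟨-, hge⟩, -, heq⟩
    have heu : e * u = e := by simpa only [huk] using heq.symm
    exact eq_of_mul_eq_of_mul_eq hgu hge heu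

/-- `(𝓛_G, 𝒫_L)` is a category with subobjects: (i) every inclusion
`[(e,e,f)]` (with `e·f = e`) is a monomorphism, i.e. cancelling it on the right
of `[(g,u,e)]·[(e,e,f)] = [(h,v,e)]·[(e,e,f)]` gives `[(g,u,e)] = [(h,v,e)]`;
(ii) if an inclusion factors as `[(e,e,f)] = [(g,u,k)]·[(k,k,l)]` with
`e·f = e` and `k·l = k`, then `u = g`, so the first factor is itself an
inclusion. -/
theorem LG_category_with_subobjects {S : Type*} [Semigroup S]
    (hreg : ∀ a : S, ∃ b : S, a * b * a = a ∧ b * a * b = b) :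
    -- (i) inclusions are monomorphisms
    (∀ e f g h u v : S, e * e = e → f * f = f → g * g = g → h * h = h →
      e * f = e → (g, u, e) ∈ TSet S → (h, v, e) ∈ TSet S →
      simRel (g, u * e, f) (h, v * e, f) → simRel (g, u, e) (h, v, e)) ∧
    -- (ii) left factors of inclusions through inclusions are inclusions
    (∀ e f g k l u : S, e * e = e → f * f = f → g * g = g → k * k = k →
      l * l = l → e * f = e → k * l = k → (g, u, k) ∈ TSet S →
      simRel (e, e, f) (g, u * k, l) → u = g) :=
  LG_category_with_subobjects_general
end

section
/- Translation characterization of morphism equality (well-definedness and faithfulness of the functor 𝔏 : 𝓛_G → 𝓛_S): let S be a regular semigroup, e, f, g, h idempotents with e L g and f L h, and let u, v ∈ S with e·u = u = u·f and g·v = v = v·h. Then u = e·v if and only if s·u = s·v for every s in the principal left ideal Se = {t·e : t ∈ S}; that is, (e,u,f) ∼ (g,v,h) exactly when the right-translation maps ρ_u and ρ_v agree on Se = Sg. -/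
theorem mul_mul_right_eq_of_mul_eq {S : Type*} [Semigroup S] {s e : S} (hs : s * e = s)
    (v : S) : s * (e * v) = s * v := by
  rw [← mul_assoc, hs]

theorem translation_characterization_general {S : Type*} [Semigroup S]
    (e u v : S)
    (he : e * e = e)
    (heu : e * u = u) :
    u = e * v ↔ ∀ s : S, (∃ t : S, t * e = s) → s * u = s * v := by
  constructor
  · rintro rfl s ⟨t, rfl⟩
    exact mul_mul_right_eq_of_mul_eq (by rw [mul_assoc, he]) v
  · intro hs
    calc u = e * u := heu.symm
      _ = e * v := hs e ⟨e, he⟩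

/-- Translation characterization of morphism equality (well-definedness and
faithfulness of the functor `𝔏 : 𝓛_G → 𝓛_S`): for idempotents `e, f, g, h`
with `e L g` and `f L h`, and `u, v` with `e·u = u = u·f`, `g·v = v = v·h`,
one has `u = e·v` if and only if `s·u = s·v` for every `s` in the principal
left ideal `Se = {t·e : t ∈ S}`; that is, `(e,u,f) ∼ (g,v,h)` exactly when the
right translations `ρ_u` and `ρ_v` agree on `Se = Sg`. -/
theorem translation_characterization {S : Type*} [Semigroup S]
    (hreg : ∀ a : S, ∃ b : S, a * b * a = a ∧ b * a * b = b)
    (e f g h u v : S)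
    (he : e * e = e) (hf : f * f = f) (hg : g * g = g) (hh : h * h = h)
    (heg : LRel e g) (hfh : LRel f h)
    (heu : e * u = u) (huf : u * f = u)
    (hgv : g * v = v) (hvh : v * h = v) :
    u = e * v ↔ ∀ s : S, (∃ t : S, t * e = s) → s * u = s * v :=
  translation_characterization_general e u v he heu
end
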